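/- arXiv:1311.4136 — 6 statements merged into one kernel-verified Lean document; each statement's English description precedes it below -/
import Mathlib

section
/- Let d ≥ 1 be an integer and α > 0. The BRC function C : ℝ^d × ℝ → ℝ defined by C(x, e) = exp(−(‖x‖ + |e|)^α), where ‖·‖ is the Euclidean norm on ℝ^d, is a positive definite function on the additive group ℝ^d × ℝ if and only if α ≤ 1. -/
/-- A function `f : E → ℝ` on an additive group `E` is positive definite if for every `n`,
all points `x₁, …, xₙ ∈ E` and all real weights `λ₁, …, λₙ`, one has
`∑ᵢ ∑ⱼ λᵢ λⱼ f (xᵢ - xⱼ) ≥ 0`. -/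
def IsPosDefFun {E : Type*} [AddCommGroup E] (f : E → ℝ) : Prop :=
  ∀ (n : ℕ) (x : Fin n → E) (lam : Fin n → ℝ),
    0 ≤ ∑ i, ∑ j, lam i * lam j * f (x i - x j)

/-!
For `α ≤ 1` the exponent `(‖x‖ + |e|)^α` is negative definite: `‖·‖²` is negative definite on
an inner product space, sums of negative definite functions are negative definite, and so are
fractional powers `ψ^α` (`0 < α < 1`), because `t^α` is a positive multiple of
`∫₀^∞ (1 - e^{-ts}) s^{-1-α} ds` and each `1 - e^{-sψ}` is negative definite. Schoenberg's
theorem, that `e^{-tψ}` is positive definite for negative definite `ψ`, then applies; it follows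
from the Schur product theorem, since the kernel `ψ(xᵢ) + ψ(xⱼ) - ψ(xᵢ - xⱼ)` is positive
semidefinite.

For `α > 1`, test the corners `(0,0), (a,0), (0,b), (a,b)` of a rectangle with `‖a‖ = ‖b‖ = u`
against the weights `1, -1, -1, 1`: the quadratic form is `4 (1 - 2e^{-t} + e^{-2^α t})` with
`t = u^α`, which is negative for small `t` because `2^α > 2`.
-/

open Matrix Real MeasureTheory Set

namespace Matrix

variable {ι : Type*} [Fintype ι]

theorem posSemidef_iff_sum_nonneg {M : Matrix ι ι ℝ} :
    M.PosSemidef ↔ M.IsHermitian ∧ ∀ v : ι → ℝ, 0 ≤ ∑ i, ∑ j, v i * v j * M i j := by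
  have hform (v : ι → ℝ) : v ⬝ᵥ M *ᵥ v = ∑ i, ∑ j, v i * v j * M i j := by
    simp only [dotProduct, mulVec, Finset.mul_sum]
    exact Finset.sum_congr rfl fun i _ => Finset.sum_congr rfl fun j _ => by ring
  simp only [posSemidef_iff_dotProduct_mulVec, star_trivial, hform]

theorem PosSemidef.map_pow {A : Matrix ι ι ℝ} (hA : A.PosSemidef) (m : ℕ) :
    (A.map (· ^ m)).PosSemidef := by
  induction m with
  | zero =>
    convert posSemidef_vecMulVec_self_star (fun _ : ι => (1 : ℝ)) using 1
    ext; simp [vecMulVec_apply]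
  | succ m ih =>
    have : A.map (· ^ (m + 1)) = A.map (· ^ m) ⊙ A := by ext; simp [pow_succ]
    exact this ▸ ih.hadamard hA

theorem PosSemidef.map_exp {A : Matrix ι ι ℝ} (hA : A.PosSemidef) :
    (A.map Real.exp).PosSemidef := by
  refine posSemidef_iff_sum_nonneg.2 ⟨hA.isHermitian.map _ fun _ => rfl, fun v => ?_⟩
  have hexp (i j : ι) : HasSum (fun m : ℕ => v i * v j * (A i j ^ m / m.factorial))
      (v i * v j * Real.exp (A i j)) := by
    rw [Real.exp_eq_exp_ℝ]
    exact (NormedSpace.expSeries_div_hasSum_exp (A i j)).mul_left _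
  refine (hasSum_sum fun i _ => hasSum_sum fun j _ => hexp i j).nonneg fun m => ?_
  have := (posSemidef_iff_sum_nonneg.1 (hA.map_pow m)).2 v
  simp only [map_apply] at this
  convert div_nonneg this (Nat.cast_nonneg (α := ℝ) m.factorial) using 1
  simp only [Finset.sum_div, mul_div_assoc]

end Matrix

/-- Negative definite in the sense of Berg–Christensen–Ressel (i.e. conditionally negative
definite), normalised by `ψ 0 = 0`. -/
structure IsNegDefFun {E : Type*} [AddCommGroup E] (ψ : E → ℝ) : Prop where
  map_neg : ∀ x, ψ (-x) = ψ x
  map_zero : ψ 0 = 0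
  sum_le_zero : ∀ (n : ℕ) (x : Fin n → E) (lam : Fin n → ℝ), ∑ i, lam i = 0 →
    ∑ i, ∑ j, lam i * lam j * ψ (x i - x j) ≤ 0

namespace IsNegDefFun

variable {E : Type*} [AddCommGroup E] {ψ φ : E → ℝ}

theorem comp {E' : Type*} [AddCommGroup E'] (h : IsNegDefFun ψ) (f : E' →+ E) :
    IsNegDefFun fun x => ψ (f x) where
  map_neg x := by rw [_root_.map_neg, h.map_neg]
  map_zero := by rw [_root_.map_zero, h.map_zero]
  sum_le_zero n x lam hlam := by
    simpa only [map_sub] using h.sum_le_zero n (fun i => f (x i)) lam hlam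

theorem add (hψ : IsNegDefFun ψ) (hφ : IsNegDefFun φ) : IsNegDefFun fun x => ψ x + φ x where
  map_neg x := by rw [hψ.map_neg, hφ.map_neg]
  map_zero := by rw [hψ.map_zero, hφ.map_zero, add_zero]
  sum_le_zero n x lam hlam := by
    simp only [mul_add, Finset.sum_add_distrib]
    exact add_nonpos (hψ.sum_le_zero n x lam hlam) (hφ.sum_le_zero n x lam hlam)

theorem nonneg (h : IsNegDefFun ψ) (x : E) : 0 ≤ ψ x := by
  simpa [Fin.sum_univ_two, h.map_neg, h.map_zero] using h.sum_le_zero 2 ![x, 0] ![1, -1] (by simp)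

theorem posSemidef_kernel (h : IsNegDefFun ψ) {n : ℕ} (x : Fin n → E) :
    (of fun i j => ψ (x i) + ψ (x j) - ψ (x i - x j)).PosSemidef := by
  refine posSemidef_iff_sum_nonneg.2 ⟨IsHermitian.ext fun i j => ?_, fun μ => ?_⟩
  · simp [← h.map_neg (x i - x j), add_comm]
  -- adjoin the point `0` with weight `-∑ μ` to get weights of total mass zero
  have hext := h.sum_le_zero (n + 1) (Fin.cons 0 x) (Fin.cons (-∑ i, μ i) μ)
    (by simp [Fin.sum_univ_succ])
  simp only [Fin.sum_univ_succ, Fin.cons_zero, Fin.cons_succ, zero_sub, sub_zero,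
    h.map_neg, h.map_zero, mul_zero, neg_mul, mul_neg, Finset.sum_neg_distrib] at hext
  simp only [of_apply, mul_add, mul_sub, Finset.sum_add_distrib, Finset.sum_sub_distrib] at hext ⊢
  rw [Finset.sum_comm (f := fun i j => μ i * μ j * ψ (x j))]
  simp only [← Finset.sum_mul, ← Finset.mul_sum, mul_assoc, mul_left_comm (μ _) (∑ i, μ i),
    Finset.sum_neg_distrib] at hext ⊢
  linarith

theorem isPosDefFun_exp_neg_mul (h : IsNegDefFun ψ) {t : ℝ} (ht : 0 ≤ t) :
    IsPosDefFun fun x => exp (-(t * ψ x)) := by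
  intro n x lam
  have hexp := (posSemidef_iff_sum_nonneg.1 ((h.posSemidef_kernel x).smul ht).map_exp).2
    fun i => lam i * exp (-(t * ψ (x i)))
  refine hexp.trans_eq (Finset.sum_congr rfl fun i _ => Finset.sum_congr rfl fun j _ => ?_)
  simp only [map_apply, Matrix.smul_apply, of_apply, smul_eq_mul]
  rw [mul_mul_mul_comm, mul_assoc, ← exp_add, ← exp_add]
  ring_nf

end IsNegDefFun

theorem isNegDefFun_norm_sq {F : Type*} [NormedAddCommGroup F] [InnerProductSpace ℝ F] :
    IsNegDefFun fun x : F => ‖x‖ ^ 2 where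
  map_neg := by simp
  map_zero := by simp
  sum_le_zero n x lam hlam := by
    have hgram : ∑ i, ∑ j, lam i * lam j * inner ℝ (x i) (x j) = ‖∑ i, lam i • x i‖ ^ 2 := by
      simp only [← real_inner_self_eq_norm_sq, sum_inner, inner_sum, real_inner_smul_left,
        real_inner_smul_right, mul_assoc]
      exact Finset.sum_congr rfl fun i _ => Finset.sum_congr rfl fun j _ => by rw [real_inner_comm]
    simp only [norm_sub_sq_real, mul_add, mul_sub, Finset.sum_add_distrib, Finset.sum_sub_distrib,
      mul_assoc, mul_left_comm _ (2 : ℝ), ← Finset.mul_sum, ← Finset.sum_mul, hlam] at hgram ⊢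
    rw [hgram]
    simp only [zero_mul, mul_zero, Finset.sum_const_zero, zero_sub, add_zero, neg_nonpos]
    positivity

section FractionalPower

variable {α : ℝ}

theorem integrableOn_one_sub_exp_neg_mul_rpow (hα : 0 < α) (hα1 : α < 1) :
    IntegrableOn (fun s : ℝ => (1 - exp (-s)) * s ^ (-1 - α)) (Ioi 0) := by
  have hcont : ContinuousOn (fun s : ℝ => (1 - exp (-s)) * s ^ (-1 - α)) (Ioi 0) := by
    refine ContinuousOn.mul (by fun_prop) ?_
    exact continuousOn_id.rpow_const fun s hs => Or.inl (ne_of_gt hs)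
  have hbound {s : ℝ} (hs : 0 < s) : 0 ≤ 1 - exp (-s) ∧ 1 - exp (-s) ≤ min s 1 := by
    refine ⟨by simp [hs.le], le_min ?_ (by linarith [exp_pos (-s)])⟩
    linarith [add_one_le_exp (-s)]
  rw [← Ioc_union_Ioi_eq_Ioi zero_le_one]
  refine IntegrableOn.union ?_ ?_
  · have hdom : IntegrableOn (fun s : ℝ => s ^ (-α)) (Ioc 0 1) :=
      (intervalIntegrable_iff_integrableOn_Ioc_of_le zero_le_one).1
        (intervalIntegral.intervalIntegrable_rpow' (by linarith))
    refine hdom.mono' ((hcont.mono Ioc_subset_Ioi_self).aestronglyMeasurable measurableSet_Ioc)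
      ((ae_restrict_iff' measurableSet_Ioc).2 (Filter.Eventually.of_forall fun s hs => ?_))
    obtain ⟨h0, h1⟩ := hbound hs.1
    have hpow : s ^ (-α) = s * s ^ (-1 - α) := by
      rw [← rpow_one_add' hs.1.le (by linarith)]; ring_nf
    have hrpow := (rpow_pos_of_pos hs.1 (-1 - α)).le
    rw [norm_mul, norm_of_nonneg h0, norm_of_nonneg hrpow, hpow]
    exact mul_le_mul_of_nonneg_right (h1.trans (min_le_left _ _)) hrpow
  · have hdom : IntegrableOn (fun s : ℝ => s ^ (-1 - α)) (Ioi 1) :=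
      integrableOn_Ioi_rpow_of_lt (by linarith) one_pos
    refine hdom.mono' ((hcont.mono (Ioi_subset_Ioi zero_le_one)).aestronglyMeasurable
      measurableSet_Ioi) ((ae_restrict_iff' measurableSet_Ioi).2
        (Filter.Eventually.of_forall fun s (hs : 1 < s) => ?_))
    obtain ⟨h0, h1⟩ := hbound (zero_lt_one.trans hs)
    have hrpow := (rpow_pos_of_pos (zero_lt_one.trans hs) (-1 - α)).le
    rw [norm_mul, norm_of_nonneg h0, norm_of_nonneg hrpow]
    exact mul_le_of_le_one_left hrpow (h1.trans (min_le_right _ _))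

theorem integral_one_sub_exp_neg_mul_rpow_pos (hα : 0 < α) (hα1 : α < 1) :
    0 < ∫ s in Ioi 0, (1 - exp (-s)) * s ^ (-1 - α) := by
  have hpos : ∀ s ∈ Ioi (0 : ℝ), 0 < (1 - exp (-s)) * s ^ (-1 - α) := fun s (hs : 0 < s) =>
    mul_pos (by simpa using hs) (rpow_pos_of_pos hs _)
  rw [setIntegral_pos_iff_support_of_nonneg_ae
    ((ae_restrict_iff' measurableSet_Ioi).2
      (Filter.Eventually.of_forall fun s hs => (hpos s hs).le))
    (integrableOn_one_sub_exp_neg_mul_rpow hα hα1),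
    inter_eq_right.2 fun s hs => Function.mem_support.2 (hpos s hs).ne', Real.volume_Ioi]
  simp

theorem one_sub_exp_neg_mul_mul_rpow_eq {t s : ℝ} (ht : 0 < t) (hs : 0 < s) :
    (1 - exp (-(t * s))) * s ^ (-1 - α)
      = t ^ (1 + α) * ((1 - exp (-(t * s))) * (t * s) ^ (-1 - α)) := by
  rw [mul_rpow ht.le hs.le, mul_left_comm, ← mul_assoc (t ^ (1 + α)), ← rpow_add ht]
  norm_num

theorem integrableOn_one_sub_exp_neg_mul_mul_rpow (hα : 0 < α) (hα1 : α < 1) {t : ℝ}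
    (ht : 0 ≤ t) : IntegrableOn (fun s : ℝ => (1 - exp (-(t * s))) * s ^ (-1 - α)) (Ioi 0) := by
  obtain rfl | ht := ht.eq_or_lt
  · simp
  have hcomp := (integrableOn_Ioi_comp_mul_left_iff (fun s => (1 - exp (-s)) * s ^ (-1 - α)) 0
    ht).2 (by simpa using integrableOn_one_sub_exp_neg_mul_rpow hα hα1)
  exact IntegrableOn.congr_fun (hcomp.const_mul (t ^ (1 + α)))
    (fun s hs => (one_sub_exp_neg_mul_mul_rpow_eq ht hs).symm) measurableSet_Ioi

theorem integral_one_sub_exp_neg_mul_mul_rpow (hα : 0 < α) {t : ℝ} (ht : 0 ≤ t) :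
    ∫ s in Ioi 0, (1 - exp (-(t * s))) * s ^ (-1 - α)
      = t ^ α * ∫ s in Ioi 0, (1 - exp (-s)) * s ^ (-1 - α) := by
  obtain rfl | ht := ht.eq_or_lt
  · simp [zero_rpow hα.ne']
  rw [setIntegral_congr_fun measurableSet_Ioi fun s hs => one_sub_exp_neg_mul_mul_rpow_eq ht hs,
    integral_const_mul,
    integral_comp_mul_left_Ioi (fun s => (1 - exp (-s)) * s ^ (-1 - α)) 0 ht, mul_zero,
    smul_eq_mul, ← mul_assoc, ← rpow_neg_one, ← rpow_add ht]
  norm_num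

end FractionalPower

namespace IsNegDefFun

variable {E : Type*} [AddCommGroup E] {ψ : E → ℝ}

theorem rpow (h : IsNegDefFun ψ) {α : ℝ} (hα : 0 < α) (hα1 : α ≤ 1) :
    IsNegDefFun fun x => ψ x ^ α := by
  obtain rfl | hα1 := hα1.eq_or_lt
  · simpa using h
  refine ⟨fun x => by rw [h.map_neg], by rw [h.map_zero, zero_rpow hα.ne'],
    fun n x lam hlam => ?_⟩
  have hint (i j : Fin n) : IntegrableOn
      (fun s => lam i * lam j * ((1 - exp (-(ψ (x i - x j) * s))) * s ^ (-1 - α))) (Ioi 0) :=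
    (integrableOn_one_sub_exp_neg_mul_mul_rpow hα hα1 (h.nonneg _)).const_mul _
  have hI := integral_one_sub_exp_neg_mul_rpow_pos hα hα1
  refine nonpos_of_mul_nonpos_left ?_ hI
  -- the constant part of `1 - e^{-sψ}` is killed by `∑ λ = 0`
  calc (∑ i, ∑ j, lam i * lam j * ψ (x i - x j) ^ α) * ∫ s in Ioi 0, (1 - exp (-s)) * s ^ (-1 - α)
      = ∫ s in Ioi 0, ∑ i, ∑ j,
          lam i * lam j * ((1 - exp (-(ψ (x i - x j) * s))) * s ^ (-1 - α)) := by
        rw [integral_finsetSum _ fun i _ => integrable_finsetSum _ fun j _ => hint i j,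
          Finset.sum_mul]
        refine Finset.sum_congr rfl fun i _ => ?_
        rw [integral_finsetSum _ fun j _ => hint i j, Finset.sum_mul]
        refine Finset.sum_congr rfl fun j _ => ?_
        rw [integral_const_mul, integral_one_sub_exp_neg_mul_mul_rpow hα (h.nonneg _), mul_assoc]
    _ = ∫ s in Ioi 0, -(∑ i, ∑ j, lam i * lam j * exp (-(s * ψ (x i - x j)))) * s ^ (-1 - α) := by
        congr 1 with s
        have hmass : ∑ i, ∑ j, lam i * lam j = 0 := by rw [← Finset.sum_mul_sum, hlam, zero_mul]
        simp only [mul_sub, sub_mul, one_mul, Finset.sum_sub_distrib, ← Finset.sum_mul, hmass,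
          zero_mul, zero_sub, neg_mul]
        simp only [Finset.sum_mul, mul_assoc, mul_comm s]
    _ ≤ 0 := by
        refine setIntegral_nonpos measurableSet_Ioi fun s (hs : 0 < s) => ?_
        exact mul_nonpos_of_nonpos_of_nonneg
          (neg_nonpos.2 ((h.isPosDefFun_exp_neg_mul hs.le) n x lam)) (rpow_pos_of_pos hs _).le

end IsNegDefFun

theorem isNegDefFun_norm {F : Type*} [NormedAddCommGroup F] [InnerProductSpace ℝ F] :
    IsNegDefFun fun x : F => ‖x‖ := by
  convert (isNegDefFun_norm_sq (F := F)).rpow one_half_pos one_half_lt_one.le with x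
  rw [← sqrt_eq_rpow, sqrt_sq (norm_nonneg x)]

theorem isPosDefFun_exp_neg_norm_add_norm_rpow {F G : Type*} [NormedAddCommGroup F]
    [InnerProductSpace ℝ F] [NormedAddCommGroup G] [InnerProductSpace ℝ G] {α : ℝ} (hα : 0 < α)
    (hα1 : α ≤ 1) : IsPosDefFun fun p : F × G => exp (-(‖p.1‖ + ‖p.2‖) ^ α) := by
  have hsum : IsNegDefFun fun p : F × G => ‖p.1‖ + ‖p.2‖ :=
    (isNegDefFun_norm.comp (AddMonoidHom.fst F G)).add
      (isNegDefFun_norm.comp (AddMonoidHom.snd F G))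
  simpa using (hsum.rpow hα hα1).isPosDefFun_exp_neg_mul zero_le_one

theorem exists_one_add_exp_neg_mul_lt_two_mul_exp_neg {β : ℝ} (hβ : 2 < β) :
    ∃ t > 0, 1 + exp (-(β * t)) < 2 * exp (-t) := by
  have hβ0 : 0 < β := by linarith
  set t := (β - 2) / (2 * β ^ 2) with ht_def
  have ht : 0 < t := div_pos (by linarith) (by positivity)
  have hβt : β ^ 2 * t = (β - 2) / 2 := by rw [ht_def]; field_simp
  have hβt_le : |-(β * t)| ≤ 1 := by
    rw [abs_neg, abs_of_pos (by positivity)]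
    nlinarith
  -- `e^{-t} ≥ 1 - t` and `e^{-βt} ≤ 1 - βt + (βt)²`, and `(βt)² = (β - 2) t / 2`
  have hlow := add_one_le_exp (-t)
  have hup := (abs_le.1 (abs_exp_sub_one_sub_id_le hβt_le)).2
  refine ⟨t, ht, ?_⟩
  nlinarith

theorem le_one_of_isPosDefFun_exp_neg_norm_add_norm_rpow {F G : Type*} [NormedAddCommGroup F]
    [NormedSpace ℝ F] [Nontrivial F] [NormedAddCommGroup G] [NormedSpace ℝ G] [Nontrivial G]
    {α : ℝ} (hα : 0 < α) (h : IsPosDefFun fun p : F × G => exp (-(‖p.1‖ + ‖p.2‖) ^ α)) :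
    α ≤ 1 := by
  by_contra! hα1
  obtain ⟨t, ht, hgap⟩ := exists_one_add_exp_neg_mul_lt_two_mul_exp_neg
    (by simpa using rpow_lt_rpow_of_exponent_lt one_lt_two hα1 : (2 : ℝ) < 2 ^ α)
  set u := t ^ α⁻¹
  have hu : 0 < u := rpow_pos_of_pos ht _
  obtain ⟨a, ha⟩ := exists_norm_eq F hu.le
  obtain ⟨b, hb⟩ := exists_norm_eq G hu.le
  have hut : u ^ α = t := rpow_inv_rpow ht.le hα.ne'
  have h2ut : (u + u) ^ α = 2 ^ α * t := by rw [← two_mul, mul_rpow zero_le_two hu.le, hut]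
  have := h 4 ![(0, 0), (a, 0), (0, b), (a, b)] ![1, -1, -1, 1]
  simp only [Prod.fst_sub, Prod.snd_sub, Fin.sum_univ_four, Fin.isValue, cons_val_zero, mul_one,
    sub_zero, cons_val_one, mul_neg, neg_mul, cons_val, norm_zero, add_zero, zero_rpow hα.ne',
    neg_zero, exp_zero, zero_sub, norm_neg, ha, hut, one_mul, hb, zero_add, h2ut, sub_self,
    neg_neg] at this
  linarith

/-- The BRC function `C(x, e) = exp(−(‖x‖ + |e|)^α)` on `ℝ^d × ℝ` (with the Euclidean norm
on `ℝ^d`) is positive definite if and only if `α ≤ 1`. -/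
theorem brc_posDef_iff (d : ℕ) (hd : 1 ≤ d) (α : ℝ) (hα : 0 < α) :
    IsPosDefFun (fun p : EuclideanSpace ℝ (Fin d) × ℝ =>
      Real.exp (-(‖p.1‖ + |p.2|) ^ α)) ↔ α ≤ 1 := by
  have : Nonempty (Fin d) := ⟨⟨0, hd⟩⟩
  exact ⟨le_one_of_isPosDefFun_exp_neg_norm_add_norm_rpow hα,
    isPosDefFun_exp_neg_norm_add_norm_rpow hα⟩
end

section
/- For α > 0, the function γ : ℝ × ℝ → ℝ defined by γ(s, t) = (|s| + |t|)^α is conditionally negative definite (a variogram) on ℝ² if and only if α ≤ 1. -/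
/-!
Necessity: at the vertices `(0,0), (1,0), (0,1), (1,1)` of the unit square with weights
`1, -1, -1, 1` the quadratic form equals `4 * 2 ^ α - 8`.

Sufficiency: for `u ≥ 0` the kernel `exp (-u (|s| + |t|))` is positive semidefinite, as the Schur
product of the kernels `exp (-u |s|)` on the two coordinates; these are diagonal rescalings of the
Gram kernel `min a b = ⟪𝟙_(0,a], 𝟙_(0,b]⟫` of `L²`. Laplace's formula
`(t + x)⁻¹ = ∫₀^∞ exp (-s (t + x)) ds` makes `(t + γ)⁻¹` positive semidefinite for `t > 0`, and the
Stieltjes representation `x ^ α = C ∫₀^∞ t ^ α (t⁻¹ - (t + x)⁻¹) dt` for `0 < α < 1` turns this into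
conditional negative definiteness of `γ ^ α`, because weights summing to zero annihilate the
constant `t⁻¹`. The case `α = 1` is the limit `α → 1⁻`.
-/

open MeasureTheory Set Real Matrix Filter Topology

def IsCondNegDefFun {E : Type*} [AddCommGroup E] (γ : E → ℝ) : Prop :=
  γ 0 = 0 ∧ (∀ η, γ (-η) = γ η) ∧
    ∀ (n : ℕ) (x : Fin n → E) (lam : Fin n → ℝ), (∑ i, lam i) = 0 →
      ∑ i, ∑ j, lam i * lam j * γ (x i - x j) ≤ 0

def IsPosSemidefFun {E : Type*} [AddCommGroup E] (φ : E → ℝ) : Prop :=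
  ∀ (n : ℕ) (x : Fin n → E), (Matrix.of fun i j => φ (x i - x j)).PosSemidef

namespace IsPosSemidefFun

variable {E F : Type*} [AddCommGroup E] [AddCommGroup F] {φ ψ : E → ℝ}

theorem sum_mul_mul_nonneg (hφ : IsPosSemidefFun φ) {n : ℕ} (x : Fin n → E) (g : Fin n → ℝ) :
    0 ≤ ∑ i, ∑ j, g i * g j * φ (x i - x j) := by
  refine ((hφ n x).dotProduct_mulVec_nonneg g).trans_eq ?_
  simp only [dotProduct, mulVec, Finset.mul_sum, star_trivial, of_apply]
  exact Finset.sum_congr rfl fun i _ => Finset.sum_congr rfl fun j _ => by ring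

theorem mul (hφ : IsPosSemidefFun φ) (hψ : IsPosSemidefFun ψ) : IsPosSemidefFun (φ * ψ) :=
  fun n x => (hφ n x).hadamard (hψ n x)

theorem comp (hφ : IsPosSemidefFun φ) (f : F →+ E) : IsPosSemidefFun (φ ∘ f) := by
  intro n x
  simpa [map_sub] using hφ n (f ∘ x)

end IsPosSemidefFun

theorem Matrix.posSemidef_min_of_nonneg {ι : Type*} [Finite ι] {z : ι → ℝ} (hz : ∀ i, 0 ≤ z i) :
    (Matrix.of fun i j => min (z i) (z j)).PosSemidef := by
  let v : ι → Lp ℝ 2 (volume : Measure ℝ) := fun i =>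
    indicatorConstLp 2 measurableSet_Ioc (by simp) (1 : ℝ) (s := Ioc 0 (z i))
  have hv : (Matrix.of fun i j => min (z i) (z j)) = gram ℝ v := by
    ext i j
    simp [v, L2.inner_indicatorConstLp_one_indicatorConstLp_one, Ioc_inter_Ioc, hz]
  exact hv ▸ posSemidef_gram ℝ v

theorem isPosSemidefFun_exp_neg_abs : IsPosSemidefFun fun s : ℝ => exp (-|s|) := by
  intro n a
  have habs : ∀ s t : ℝ,
      exp (-|s - t|) = exp (-s) * min (exp (2 * s)) (exp (2 * t)) * exp (-t) := by
    intro s t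
    rcases le_total s t with h | h
    · rw [abs_of_nonpos (by linarith), min_eq_left (exp_le_exp.2 (by linarith)), ← exp_add,
        ← exp_add]
      ring_nf
    · rw [abs_of_nonneg (by linarith), min_eq_right (exp_le_exp.2 (by linarith)), ← exp_add,
        ← exp_add]
      ring_nf
  have hmin := Matrix.posSemidef_min_of_nonneg fun i => (exp_pos (2 * a i)).le
  convert hmin.mul_mul_conjTranspose_same (diagonal fun i => exp (-a i)) using 1
  ext i j
  simp [habs]

theorem isPosSemidefFun_exp_neg_mul_abs {u : ℝ} (hu : 0 ≤ u) :
    IsPosSemidefFun fun s : ℝ => exp (-(u * |s|)) := by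
  convert isPosSemidefFun_exp_neg_abs.comp (AddMonoidHom.mulLeft u) using 1
  ext s
  simp [abs_mul, abs_of_nonneg hu]

theorem isPosSemidefFun_exp_neg_mul_abs_add_abs {u : ℝ} (hu : 0 ≤ u) :
    IsPosSemidefFun fun p : ℝ × ℝ => exp (-(u * (|p.1| + |p.2|))) := by
  convert ((isPosSemidefFun_exp_neg_mul_abs hu).comp (AddMonoidHom.fst ℝ ℝ)).mul
    ((isPosSemidefFun_exp_neg_mul_abs hu).comp (AddMonoidHom.snd ℝ ℝ)) using 1
  ext p
  simp [← exp_add, mul_add, add_comm]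

theorem sum_mul_mul_const_sub {ι : Type*} [Fintype ι] {lam : ι → ℝ} (hlam : ∑ i, lam i = 0)
    (c : ℝ) (h : ι → ι → ℝ) :
    ∑ i, ∑ j, lam i * lam j * (c - h i j) = -∑ i, ∑ j, lam i * lam j * h i j := by
  simp [mul_sub, Finset.sum_sub_distrib, ← Finset.sum_mul, ← Finset.mul_sum, hlam]

variable {E : Type*} [AddCommGroup E]

theorem sum_mul_mul_inv_add_nonneg {γ : E → ℝ} (hγ : ∀ η, 0 ≤ γ η)
    (hexp : ∀ u, 0 ≤ u → IsPosSemidefFun fun η => exp (-(u * γ η))) {t : ℝ} (ht : 0 < t)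
    {n : ℕ} (x : Fin n → E) (g : Fin n → ℝ) :
    0 ≤ ∑ i, ∑ j, g i * g j * (t + γ (x i - x j))⁻¹ := by
  have hint : ∀ a, 0 ≤ a → IntegrableOn (fun s => exp (-(t + a) * s)) (Ioi 0) :=
    fun a ha => integrableOn_exp_mul_Ioi (by linarith) 0
  have hlaplace : ∀ a, 0 ≤ a → (t + a)⁻¹ = ∫ s in Ioi 0, exp (-(t + a) * s) := by
    intro a ha
    rw [integral_exp_mul_Ioi (by linarith) 0, mul_zero, exp_zero, neg_div_neg_eq, one_div]
  calc 0 ≤ ∫ s in Ioi 0, exp (-(s * t)) * ∑ i, ∑ j, g i * g j * exp (-(s * γ (x i - x j))) :=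
        setIntegral_nonneg measurableSet_Ioi fun s hs =>
          mul_nonneg (exp_pos _).le ((hexp s (le_of_lt hs)).sum_mul_mul_nonneg x g)
    _ = ∫ s in Ioi 0, ∑ i, ∑ j, g i * g j * exp (-(t + γ (x i - x j)) * s) := by
        refine integral_congr_ae (Filter.Eventually.of_forall fun s => ?_)
        simp only [Finset.mul_sum, neg_add, add_mul, exp_add]
        exact Finset.sum_congr rfl fun i _ => Finset.sum_congr rfl fun j _ => by ring_nf
    _ = ∑ i, ∑ j, g i * g j * (t + γ (x i - x j))⁻¹ := by
        rw [integral_finsetSum _ fun i _ => integrable_finsetSum _ fun j _ =>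
          (hint _ (hγ _)).const_mul _]
        refine Finset.sum_congr rfl fun i _ => ?_
        rw [integral_finsetSum _ fun j _ => (hint _ (hγ _)).const_mul _]
        simp_rw [integral_const_mul, ← hlaplace _ (hγ _)]

theorem isCondNegDefFun_rpow_of_lt_one {γ : E → ℝ} (h0 : γ 0 = 0) (hneg : ∀ η, γ (-η) = γ η)
    (hγ : ∀ η, 0 ≤ γ η) (hexp : ∀ u, 0 ≤ u → IsPosSemidefFun fun η => exp (-(u * γ η)))
    {p : ℝ} (hp : p ∈ Ioo 0 1) : IsCondNegDefFun fun η => γ η ^ p := by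
  refine ⟨by simp [h0, zero_rpow hp.1.ne'], fun η => by simp [hneg], fun n x lam hlam => ?_⟩
  have hint : ∀ i j, IntegrableOn (fun t => lam i * lam j * rpowIntegrand₀₁ p t (γ (x i - x j)))
      (Ioi 0) := fun i j => (integrableOn_rpowIntegrand₀₁_Ioi hp (hγ _)).const_mul _
  have hintegrand : ∀ t ∈ Ioi (0 : ℝ), ∑ i, ∑ j, lam i * lam j * rpowIntegrand₀₁ p t (γ (x i - x j))
      = -∑ i, ∑ j, lam i * lam j * (t ^ p * (t + γ (x i - x j))⁻¹) := by
    intro t _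
    rw [← sum_mul_mul_const_sub hlam (t ^ p * t⁻¹)]
    simp only [rpowIntegrand₀₁, mul_sub]
  calc ∑ i, ∑ j, lam i * lam j * γ (x i - x j) ^ p
      = (∫ t in Ioi 0, rpowIntegrand₀₁ p t 1)⁻¹ *
          ∫ t in Ioi 0, ∑ i, ∑ j, lam i * lam j * rpowIntegrand₀₁ p t (γ (x i - x j)) := by
        simp_rw [rpow_eq_const_mul_integral hp (hγ _), integral_finsetSum _ fun i _ =>
          integrable_finsetSum _ fun j _ => hint i j, integral_finsetSum _ fun j _ => hint _ j,
          integral_const_mul, Finset.mul_sum]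
        exact Finset.sum_congr rfl fun i _ => Finset.sum_congr rfl fun j _ => by ring
    _ ≤ 0 := by
        refine mul_nonpos_of_nonneg_of_nonpos
          (inv_nonneg.2 (integral_rpowIntegrand₀₁_one_pos hp).le) ?_
        rw [setIntegral_congr_fun measurableSet_Ioi hintegrand]
        refine setIntegral_nonpos measurableSet_Ioi fun t ht => neg_nonpos.2 ?_
        have := mul_nonneg (rpow_nonneg (le_of_lt ht) p)
          (sum_mul_mul_inv_add_nonneg hγ hexp ht x lam)
        simpa only [Finset.mul_sum, mul_left_comm (t ^ p)] using this

theorem IsCondNegDefFun.of_tendsto {ι : Type*} {l : Filter ι} [l.NeBot] {γ : ι → E → ℝ}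
    {γ₀ : E → ℝ} (hγ : ∀ᶠ k in l, IsCondNegDefFun (γ k))
    (hlim : ∀ η, Tendsto (fun k => γ k η) l (𝓝 (γ₀ η))) : IsCondNegDefFun γ₀ := by
  refine ⟨tendsto_nhds_unique (hlim 0) ?_, fun η => tendsto_nhds_unique (hlim (-η)) ?_,
    fun n x lam hlam => ?_⟩
  · exact tendsto_const_nhds.congr' (hγ.mono fun k hk => hk.1.symm)
  · exact (hlim η).congr' (hγ.mono fun k hk => (hk.2.1 η).symm)
  · refine le_of_tendsto (tendsto_finsetSum _ fun i _ => tendsto_finsetSum _ fun j _ =>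
      (hlim _).const_mul _) (hγ.mono fun k hk => hk.2.2 n x lam hlam)

theorem isCondNegDefFun_rpow {γ : E → ℝ} (h0 : γ 0 = 0) (hneg : ∀ η, γ (-η) = γ η)
    (hγ : ∀ η, 0 ≤ γ η) (hexp : ∀ u, 0 ≤ u → IsPosSemidefFun fun η => exp (-(u * γ η)))
    {p : ℝ} (hp : p ∈ Ioc 0 1) : IsCondNegDefFun fun η => γ η ^ p := by
  rcases hp.2.lt_or_eq with hp1 | rfl
  · exact isCondNegDefFun_rpow_of_lt_one h0 hneg hγ hexp ⟨hp.1, hp1⟩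
  · refine IsCondNegDefFun.of_tendsto (l := 𝓝[<] 1) (γ := fun (q : ℝ) η => γ η ^ q) ?_
      fun η => ?_
    · exact Filter.eventually_of_mem (Ioo_mem_nhdsLT hp.1)
        fun q hq => isCondNegDefFun_rpow_of_lt_one h0 hneg hγ hexp hq
    · exact (continuousAt_const_rpow' one_ne_zero).tendsto.mono_left nhdsWithin_le_nhds

theorem le_one_of_isCondNegDefFun_abs_add_abs_rpow {α : ℝ} (hα : 0 < α)
    (h : IsCondNegDefFun fun p : ℝ × ℝ => (|p.1| + |p.2|) ^ α) : α ≤ 1 := by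
  have key := h.2.2 4 ![(0, 0), (1, 0), (0, 1), (1, 1)] ![1, -1, -1, 1]
    (by simp [Fin.sum_univ_four])
  simp only [Fin.sum_univ_four, Matrix.cons_val_zero, Matrix.cons_val_one, Matrix.head_cons,
    Matrix.cons_val_two, Matrix.tail_cons, Matrix.cons_val_three, Prod.mk_sub_mk] at key
  norm_num [zero_rpow hα.ne'] at key
  have h2 : (2 : ℝ) ^ α ≤ 2 ^ (1 : ℝ) := by
    rw [rpow_one]
    linarith
  exact (rpow_le_rpow_left_iff one_lt_two).1 h2

/-- For `α > 0`, the function `γ(s, t) = (|s| + |t|)^α` on `ℝ × ℝ` is conditionally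
negative definite (a variogram) if and only if `α ≤ 1`. -/
theorem sum_abs_pow_variogram_iff (α : ℝ) (hα : 0 < α) :
    IsCondNegDefFun (fun p : ℝ × ℝ => (|p.1| + |p.2|) ^ α) ↔ α ≤ 1 :=
  ⟨le_one_of_isCondNegDefFun_abs_add_abs_rpow hα, fun hα1 =>
    isCondNegDefFun_rpow (γ := fun p : ℝ × ℝ => |p.1| + |p.2|) (by simp)
      (fun η => by simp) (fun η => by positivity)
      (fun _ hu => isPosSemidefFun_exp_neg_mul_abs_add_abs hu) ⟨hα, hα1⟩⟩
end

section
/- Let γ : ℝ^n → ℝ be a conditionally negative definite function with γ ≥ 0. Then the square root of γ is subadditive: for all η, ξ ∈ ℝ^n, √(γ(η + ξ)) ≤ √(γ(η)) + √(γ(ξ)). -/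
namespace IsCondNegDefFun

variable {E : Type*} [AddCommGroup E] {γ : E → ℝ}

theorem nonneg (hγ : IsCondNegDefFun γ) (η : E) : 0 ≤ γ η := by
  obtain ⟨h0, hsymm, hcnd⟩ := hγ
  have h := hcnd 2 ![0, η] ![1, -1] (by simp)
  simp only [Fin.sum_univ_two, Matrix.cons_val_zero, Matrix.cons_val_one, Matrix.cons_val_fin_one,
    sub_zero, zero_sub, sub_self, h0, hsymm] at h
  linarith

theorem quadratic_nonneg (hγ : IsCondNegDefFun γ) (η ξ : E) (t : ℝ) :
    0 ≤ γ η * (t * t) + (γ η + γ ξ - γ (η + ξ)) * t + γ ξ := by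
  obtain ⟨h0, hsymm, hcnd⟩ := hγ
  have h := hcnd 3 ![0, η, η + ξ] ![t, -(t + 1), 1] (by simp [Fin.sum_univ_three])
  simp only [Fin.sum_univ_three, Matrix.cons_val_zero, Matrix.cons_val_one, Matrix.cons_val,
    sub_zero, zero_sub, sub_self, sub_add_cancel_left, add_sub_cancel_left, h0, hsymm] at h
  linarith

end IsCondNegDefFun

theorem Real.sqrt_le_sqrt_add_sqrt_of_discrim_nonpos {a b c : ℝ} (ha : 0 ≤ a) (hb : 0 ≤ b)
    (h : discrim a (a + b - c) b ≤ 0) : √c ≤ √a + √b := by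
  have hsq : (c - a - b) ^ 2 ≤ (2 * (√a * √b)) ^ 2 := by
    rw [mul_pow, mul_pow, Real.sq_sqrt ha, Real.sq_sqrt hb]
    rw [discrim] at h
    linarith
  have hle : c - a - b ≤ 2 * (√a * √b) :=
    (le_abs_self _).trans (abs_le_of_sq_le_sq hsq (by positivity))
  rw [Real.sqrt_le_iff, add_sq, Real.sq_sqrt ha, Real.sq_sqrt hb]
  exact ⟨by positivity, by linarith⟩

theorem variogram_sqrt_subadditive_general (n : ℕ) (γ : EuclideanSpace ℝ (Fin n) → ℝ)
    (hγ : IsCondNegDefFun γ) :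
    ∀ η ξ : EuclideanSpace ℝ (Fin n),
      Real.sqrt (γ (η + ξ)) ≤ Real.sqrt (γ η) + Real.sqrt (γ ξ) := fun η ξ =>
  Real.sqrt_le_sqrt_add_sqrt_of_discrim_nonpos (hγ.nonneg η) (hγ.nonneg ξ)
    (discrim_le_zero (hγ.quadratic_nonneg η ξ))

/-- If `γ : ℝ^n → ℝ` is a nonnegative conditionally negative definite function, then
`√γ` is subadditive: `√(γ(η + ξ)) ≤ √(γ η) + √(γ ξ)` for all `η, ξ`. -/
theorem variogram_sqrt_subadditive (n : ℕ) (γ : EuclideanSpace ℝ (Fin n) → ℝ)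
    (hγ : IsCondNegDefFun γ) (hγ0 : ∀ η, 0 ≤ γ η) :
    ∀ η ξ : EuclideanSpace ℝ (Fin n),
      Real.sqrt (γ (η + ξ)) ≤ Real.sqrt (γ η) + Real.sqrt (γ ξ) :=
  variogram_sqrt_subadditive_general n γ hγ
end

section
/- Let d ≥ 1. The mixed-term function c : ℝ^d × ℝ → ℝ defined by c(η, τ) = ‖η‖ · |τ|, where ‖·‖ is the Euclidean norm on ℝ^d, is not conditionally negative definite on ℝ^d × ℝ. -/
section Rectangle

variable {E F : Type*} [AddCommGroup E] [AddCommGroup F]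

lemma sum_sum_rectangle_mul_eq (f : E → ℝ) (g : F → ℝ) (hf : f 0 = 0) (hg : g 0 = 0)
    (u : E) (v : F) :
    let x : Fin 4 → E × F := ![(0, 0), (u, v), (u, 0), (0, v)]
    let w : Fin 4 → ℝ := ![1, 1, -1, -1]
    ∑ i, ∑ j, w i * w j * (f (x i - x j).1 * g (x i - x j).2) =
      (f u + f (-u)) * (g v + g (-v)) := by
  simp only [Fin.sum_univ_four, Matrix.cons_val_zero, Matrix.cons_val_one, Matrix.cons_val_two,
    Matrix.cons_val_three, Matrix.head_cons, Matrix.tail_cons, Prod.mk_sub_mk, sub_self,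
    sub_zero, zero_sub, Prod.fst_zero, Prod.snd_zero, hf, hg]
  ring

lemma not_isCondNegDefFun_mul_of_pos (f : E → ℝ) (g : F → ℝ) (hf : f 0 = 0) (hg : g 0 = 0)
    {u : E} {v : F} (hpos : 0 < (f u + f (-u)) * (g v + g (-v))) :
    ¬ IsCondNegDefFun (fun p : E × F => f p.1 * g p.2) := by
  rintro ⟨-, -, hform⟩
  have hle := hform 4 ![(0, 0), (u, v), (u, 0), (0, v)] ![1, 1, -1, -1]
    (by simp [Fin.sum_univ_four])
  rw [sum_sum_rectangle_mul_eq f g hf hg u v] at hle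
  linarith

end Rectangle

/-- For `d ≥ 1`, the mixed-term function `c(η, τ) = ‖η‖ · |τ|` on `ℝ^d × ℝ` (with the
Euclidean norm on `ℝ^d`) is not conditionally negative definite. -/
theorem mixed_term_not_variogram (d : ℕ) (hd : 1 ≤ d) :
    ¬ IsCondNegDefFun (fun p : EuclideanSpace ℝ (Fin d) × ℝ => ‖p.1‖ * |p.2|) := by
  have : Nonempty (Fin d) := ⟨⟨0, hd⟩⟩
  obtain ⟨u, hu⟩ := exists_ne (0 : EuclideanSpace ℝ (Fin d))
  refine not_isCondNegDefFun_mul_of_pos (norm ·) abs norm_zero abs_zero (u := u) (v := 1) ?_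
  have : 0 < ‖u‖ := norm_pos_iff.mpr hu
  rw [norm_neg, abs_neg, abs_one]
  positivity
end

section
/- Let d ≥ 1. The function γ : ℝ^d × ℝ → ℝ defined by γ(η, τ) = (‖η‖ + |τ|)², where ‖·‖ is the Euclidean norm on ℝ^d, is not conditionally negative definite on ℝ^d × ℝ. -/
/-! A variogram satisfies the parallelogram inequality `γ (a + b) + γ (a - b) ≤ 2 (γ a + γ b)`
(test it on the vertices `a + b, 0, a, b` with weights `1, 1, -1, -1`). For
`γ (η, τ) = (‖η‖ + |τ|)²`, `a = (x, 0)` and `b = (0, ‖x‖)` the left side is `8 ‖x‖²` while the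
right side is `4 ‖x‖²`: the cross term `2 ‖η‖ |τ|` grows too fast along the diagonals. -/

theorem IsCondNegDefFun.add_add_sub_le {E : Type*} [AddCommGroup E] {γ : E → ℝ}
    (hγ : IsCondNegDefFun γ) (a b : E) : γ (a + b) + γ (a - b) ≤ 2 * (γ a + γ b) := by
  obtain ⟨h0, hneg, hcnd⟩ := hγ
  have hba : γ (b - a) = γ (a - b) := by rw [← neg_sub a b, hneg]
  have key := hcnd 4 ![a + b, 0, a, b] ![1, 1, -1, -1] (by simp [Fin.sum_univ_four])
  simp only [Fin.sum_univ_four, Matrix.cons_val_zero, Matrix.cons_val_one, Matrix.cons_val_two,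
    Matrix.cons_val_three, Matrix.head_cons, Matrix.tail_cons, sub_self, sub_zero, zero_sub,
    add_sub_cancel_left, add_sub_cancel_right, sub_add_cancel_left, sub_add_cancel_right,
    hneg, hba, h0] at key
  linarith

theorem not_isCondNegDefFun_sq_norm_add_abs {E : Type*} [NormedAddCommGroup E] [Nontrivial E] :
    ¬ IsCondNegDefFun (fun p : E × ℝ => (‖p.1‖ + |p.2|) ^ 2) := by
  intro hγ
  obtain ⟨x, hx⟩ := exists_ne (0 : E)
  have hpos : 0 < ‖x‖ := norm_pos_iff.mpr hx
  have hpar := hγ.add_add_sub_le (x, 0) (0, ‖x‖)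
  simp only [Prod.mk_add_mk, Prod.mk_sub_mk, add_zero, zero_add, sub_zero, zero_sub, norm_zero,
    abs_zero, abs_neg, abs_norm] at hpar
  nlinarith

/-- For `d ≥ 1`, the function `γ(η, τ) = (‖η‖ + |τ|)²` on `ℝ^d × ℝ` (with the Euclidean
norm on `ℝ^d`) is not conditionally negative definite. -/
theorem brc_square_not_variogram (d : ℕ) (hd : 1 ≤ d) :
    ¬ IsCondNegDefFun (fun p : EuclideanSpace ℝ (Fin d) × ℝ => (‖p.1‖ + |p.2|) ^ 2) := by
  have : Nonempty (Fin d) := ⟨⟨0, hd⟩⟩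
  exact not_isCondNegDefFun_sq_norm_add_abs
end

section
/- The triangle function applied to the Euclidean norm in two dimensions, K : ℝ² → ℝ defined by K(x) = max(1 − ‖x‖, 0), is not a positive definite function on ℝ². -/
/-!
Put checkerboard weights `(-1)^(i+j)` on the `9 × 9` square grid of spacing `h = 5/7`.
Since `1/√2 ≤ h ≤ 1`, the triangle function at a difference `h • (a, b)` of grid points is `1` at
`(0, 0)`, `1 - h` at the four nearest neighbours and `0` otherwise, i.e. a sum of products of
one-dimensional kernels. The quadratic form therefore factors as `D² + 2(1 - h) D E`, where
`D = 9` and `E = -16` are the checkerboard sums of the diagonal and of the nearest-neighbour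
kernel along one row, and `81 - 576/7 < 0`.
-/

theorem IsPosDefFun.sum_nonneg {E : Type*} [AddCommGroup E] {f : E → ℝ} (hf : IsPosDefFun f)
    {ι : Type*} [Fintype ι] (x : ι → E) (lam : ι → ℝ) :
    0 ≤ ∑ i, ∑ j, lam i * lam j * f (x i - x j) := by
  let e := Fintype.equivFin ι
  have := hf _ (x ∘ e.symm) (lam ∘ e.symm)
  simp only [Function.comp_apply,
    fun i => e.symm.sum_comp fun j => lam i * lam j * f (x i - x j)] at this
  rwa [e.symm.sum_comp fun i => ∑ j, lam i * lam j * f (x i - x j)] at this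

theorem sum_prod_sum_prod_mul {R ι κ : Type*} [CommSemiring R] [Fintype ι] [Fintype κ]
    (F : ι → ι → R) (G : κ → κ → R) :
    ∑ p : ι × κ, ∑ q : ι × κ, F p.1 q.1 * G p.2 q.2 = (∑ i, ∑ k, F i k) * ∑ j, ∑ l, G j l := by
  simp only [Fintype.sum_prod_type, Finset.sum_mul_sum]

noncomputable def latticePoint (h : ℝ) (a b : ℤ) : EuclideanSpace ℝ (Fin 2) := !₂[h * a, h * b]

theorem latticePoint_sub (h : ℝ) (a b c d : ℤ) :
    latticePoint h a b - latticePoint h c d = latticePoint h (a - c) (b - d) := by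
  ext i; fin_cases i <;> simp [latticePoint, mul_sub]

theorem norm_latticePoint {h : ℝ} (hh : 0 ≤ h) (a b : ℤ) :
    ‖latticePoint h a b‖ = h * √((a : ℝ) ^ 2 + (b : ℝ) ^ 2) := by
  rw [EuclideanSpace.norm_eq, Fin.sum_univ_two]
  simp [latticePoint, mul_pow, ← mul_add, Real.sqrt_mul (sq_nonneg h), Real.sqrt_sq hh]

def kronecker (a : ℤ) : ℤ := if a = 0 then 1 else 0

def adjacent (a : ℤ) : ℤ := if |a| = 1 then 1 else 0

theorem kronecker_adjacent_trichotomy (a : ℤ) :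
    (kronecker a = 1 ∧ adjacent a = 0 ∧ (a : ℝ) ^ 2 = 0) ∨
      (kronecker a = 0 ∧ adjacent a = 1 ∧ (a : ℝ) ^ 2 = 1) ∨
      (kronecker a = 0 ∧ adjacent a = 0 ∧ 4 ≤ (a : ℝ) ^ 2) := by
  rcases (by omega : a = 0 ∨ a = 1 ∨ a = -1 ∨ 2 ≤ a ∨ a ≤ -2) with h | h | h | h
  · simp [kronecker, adjacent, h]
  · simp [kronecker, adjacent, h]
  · simp [kronecker, adjacent, h]
  · have h4 : (4 : ℤ) ≤ a ^ 2 := by rcases h with h | h <;> nlinarith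
    right; right
    refine ⟨?_, ?_, by exact_mod_cast h4⟩
    · simp only [kronecker]; split_ifs <;> omega
    · simp only [adjacent, abs_eq zero_le_one]; split_ifs <;> omega

theorem triangle_latticePoint {h : ℝ} (h0 : 0 ≤ h) (h1 : h ≤ 1) (h2 : 1 ≤ 2 * h ^ 2) (a b : ℤ) :
    max (1 - ‖latticePoint h a b‖) 0 =
      kronecker a * kronecker b + (1 - h) * (kronecker a * adjacent b + adjacent a * kronecker b) := by
  rw [norm_latticePoint h0]
  have hsqrt : 1 ≤ h * √2 := by
    have : (h * √2) ^ 2 = 2 * h ^ 2 := by rw [mul_pow, Real.sq_sqrt zero_le_two]; ring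
    nlinarith [mul_nonneg h0 (Real.sqrt_nonneg 2)]
  have far {s : ℝ} (hs : 2 ≤ s) : max (1 - h * √s) 0 = 0 :=
    max_eq_right (by nlinarith [Real.sqrt_le_sqrt hs])
  rcases kronecker_adjacent_trichotomy a with ⟨ka, aa, sa⟩ | ⟨ka, aa, sa⟩ | ⟨ka, aa, sa⟩ <;>
  rcases kronecker_adjacent_trichotomy b with ⟨kb, ab, sb⟩ | ⟨kb, ab, sb⟩ | ⟨kb, ab, sb⟩ <;>
  simp only [ka, aa, kb, ab] <;> push_cast
  all_goals first
    | rw [far (by linarith)]; ring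
    | rw [sa, sb]; norm_num [h1]

def checkerboardSum (w : ℤ → ℤ) (n : ℕ) : ℤ :=
  ∑ i : Fin n, ∑ k : Fin n, (-1) ^ (i + k : ℕ) * w (i - k)

theorem checkerboardSum_kronecker_nine : checkerboardSum kronecker 9 = 9 := by decide

theorem checkerboardSum_adjacent_nine : checkerboardSum adjacent 9 = -16 := by decide

theorem sum_checkerboard_triangle {h : ℝ} (h0 : 0 ≤ h) (h1 : h ≤ 1) (h2 : 1 ≤ 2 * h ^ 2) (n : ℕ) :
    ∑ p : Fin n × Fin n, ∑ q : Fin n × Fin n,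
      (-1) ^ (p.1 + p.2 : ℕ) * (-1) ^ (q.1 + q.2 : ℕ) *
        max (1 - ‖latticePoint h p.1 p.2 - latticePoint h q.1 q.2‖) 0 =
      (checkerboardSum kronecker n : ℝ) ^ 2 +
        2 * (1 - h) * checkerboardSum kronecker n * checkerboardSum adjacent n := by
  set F : Fin n → Fin n → ℝ := fun i k => (-1) ^ (i + k : ℕ) * kronecker (i - k)
  set G : Fin n → Fin n → ℝ := fun i k => (-1) ^ (i + k : ℕ) * adjacent (i - k)
  have term (p q : Fin n × Fin n) :
      (-1) ^ (p.1 + p.2 : ℕ) * (-1) ^ (q.1 + q.2 : ℕ) *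
        max (1 - ‖latticePoint h p.1 p.2 - latticePoint h q.1 q.2‖) 0 =
      F p.1 q.1 * F p.2 q.2 + (1 - h) * (F p.1 q.1 * G p.2 q.2 + G p.1 q.1 * F p.2 q.2) := by
    rw [latticePoint_sub, triangle_latticePoint h0 h1 h2]
    simp only [F, G]
    ring
  simp only [term, Finset.sum_add_distrib, ← Finset.mul_sum, sum_prod_sum_prod_mul]
  simp only [checkerboardSum, F, G]
  push_cast
  ring

/-- The triangle function applied to the Euclidean norm in two dimensions,
`K(x) = max(1 − ‖x‖, 0)`, is not positive definite on `ℝ²`. -/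
theorem triangle_not_posDef_on_plane :
    ¬ IsPosDefFun (fun x : EuclideanSpace ℝ (Fin 2) => max (1 - ‖x‖) 0) := by
  intro hK
  have := hK.sum_nonneg (fun p : Fin 9 × Fin 9 => latticePoint (5 / 7) p.1 p.2)
    (fun p => (-1) ^ (p.1 + p.2 : ℕ))
  rw [sum_checkerboard_triangle (by norm_num) (by norm_num) (by norm_num),
    checkerboardSum_kronecker_nine, checkerboardSum_adjacent_nine] at this
  norm_num at this
end
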